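/- Let M, γ : [0,T) → ℝ be differentiable functions satisfying M'(t) = -M(t)² + f(t) and γ'(t) = -γ(t)M(t), with γ(t) > 0, M(t) ≥ 0, and |f(t)| ≤ F for all t, where F ≥ 0 is constant. Define the Lyapunov function ω(t) = γ(0)γ(t) + (γ(0)/γ(t))(1 + M(t)²), assuming γ(0) > 0. Then ω'(t) ≤ (F + ½)·ω(t), and consequently M(t) ≤ ω(t) ≤ ω(0)e^{(F+½)t} for all t ∈ [0,T). -/

import Mathlib

/-!
Along a characteristic, `γ` decreases (its logarithmic derivative is `-M ≤ 0`), so `γ(t) ≤ γ(0)`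
and `ω ≥ 1 + M² ≥ M`. Differentiating, `ω' = (γ(0)M/γ)(1 - γ² - M² + 2f)`; dropping the negative
terms and using `2M ≤ 1 + M²` gives `ω' ≤ (F + ½)ω`, and Grönwall's inequality (in the form
"`ω e^{-(F+½)t}` is antitone") yields the exponential bound.
-/

open Real

/-- The Lyapunov function `ω(t) = γ(0)γ(t) + (γ(0)/γ(t))(1 + M(t)²)`. -/
noncomputable def lyap (γ M : ℝ → ℝ) (t : ℝ) : ℝ :=
  γ 0 * γ t + γ 0 / γ t * (1 + (M t) ^ 2)

open Set

theorem antitoneOn_of_hasDerivAt_nonpos {D : Set ℝ} (hD : Convex ℝ D) {g g' : ℝ → ℝ}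
    (hg : ∀ x ∈ D, HasDerivAt g (g' x) x) (hg' : ∀ x ∈ D, g' x ≤ 0) : AntitoneOn g D :=
  antitoneOn_of_hasDerivWithinAt_nonpos hD
    (fun x hx ↦ (hg x hx).continuousAt.continuousWithinAt)
    (fun x hx ↦ (hg x (interior_subset hx)).hasDerivWithinAt)
    (fun x hx ↦ hg' x (interior_subset hx))

theorem le_mul_exp_of_hasDerivAt_le_mul {D : Set ℝ} (hD : Convex ℝ D) {g g' : ℝ → ℝ} {K : ℝ}
    (hg : ∀ x ∈ D, HasDerivAt g (g' x) x) (hg' : ∀ x ∈ D, g' x ≤ K * g x)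
    {s t : ℝ} (hs : s ∈ D) (ht : t ∈ D) (hst : s ≤ t) :
    g t ≤ g s * exp (K * (t - s)) := by
  have hanti : AntitoneOn (fun x ↦ g x * exp (-(K * x))) D := by
    refine antitoneOn_of_hasDerivAt_nonpos hD (g' := fun x ↦ (g' x - K * g x) * exp (-(K * x)))
      (fun x hx ↦ ?_) (fun x hx ↦ ?_)
    · have hexp := ((hasDerivAt_id x).const_mul K).neg.exp
      exact ((hg x hx).mul hexp).congr_deriv (by simp only [Pi.neg_apply, id]; ring)
    · exact mul_nonpos_of_nonpos_of_nonneg (sub_nonpos.2 (hg' x hx)) (exp_pos _).le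
  calc g t = g t * exp (-(K * t)) * exp (K * t) := by
        rw [mul_assoc, ← exp_add, neg_add_cancel, exp_zero, mul_one]
    _ ≤ g s * exp (-(K * s)) * exp (K * t) :=
        mul_le_mul_of_nonneg_right (hanti hs ht hst) (exp_pos _).le
    _ = g s * exp (K * (t - s)) := by rw [mul_assoc, ← exp_add]; ring_nf

theorem hasDerivAt_lyap {γ M f : ℝ → ℝ} {t : ℝ} (hM : HasDerivAt M (-(M t) ^ 2 + f t) t)
    (hγ : HasDerivAt γ (-(γ t * M t)) t) (hγt : γ t ≠ 0) :
    HasDerivAt (lyap γ M) (γ 0 * M t / γ t * (1 - γ t ^ 2 - M t ^ 2 + 2 * f t)) t := by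
  have hquot := ((hasDerivAt_const t (γ 0)).div hγ hγt).mul ((hM.pow 2).const_add 1)
  exact ((hγ.const_mul (γ 0)).add hquot).congr_deriv
    (by simp only [Pi.div_apply, Pi.pow_apply]; field_simp; ring)

theorem lyapunov_rate_le {a g m x F : ℝ} (ha : 0 ≤ a) (hg : 0 < g) (hm : 0 ≤ m) (hx : |x| ≤ F) :
    a * m / g * (1 - g ^ 2 - m ^ 2 + 2 * x) ≤ (F + 1/2) * (a * g + a / g * (1 + m ^ 2)) := by
  have hag : 0 ≤ a / g := div_nonneg ha hg.le
  have hF : 0 ≤ F := (abs_nonneg x).trans hx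
  have hxF : x ≤ F := (le_abs_self x).trans hx
  calc a * m / g * (1 - g ^ 2 - m ^ 2 + 2 * x) = a / g * (m * (1 - g ^ 2 - m ^ 2 + 2 * x)) := by
        ring
    _ ≤ a / g * (m * (2 * (F + 1/2))) := by gcongr; nlinarith [sq_nonneg g, sq_nonneg m]
    _ ≤ a / g * ((F + 1/2) * (1 + m ^ 2)) :=
        mul_le_mul_of_nonneg_left (by nlinarith [sq_nonneg (m - 1)]) hag
    _ ≤ (F + 1/2) * (a * g + a / g * (1 + m ^ 2)) := by nlinarith [mul_nonneg ha hg.le]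

theorem le_lyap {γ M : ℝ → ℝ} {t : ℝ} (hγt : 0 < γ t) (hγ : γ t ≤ γ 0) : M t ≤ lyap γ M t := by
  have hratio : 1 ≤ γ 0 / γ t := (one_le_div hγt).2 hγ
  have hγ0 : 0 ≤ γ 0 * γ t := mul_nonneg (hγt.le.trans hγ) hγt.le
  unfold lyap
  nlinarith [sq_nonneg (M t - 1/2)]

theorem lyapunov_slope_bound_general (T F : ℝ) (M γ f : ℝ → ℝ)
    (hM : ∀ t ∈ Set.Ico 0 T, HasDerivAt M (-(M t) ^ 2 + f t) t)
    (hγ : ∀ t ∈ Set.Ico 0 T, HasDerivAt γ (-(γ t * M t)) t)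
    (hγpos : ∀ t ∈ Set.Ico 0 T, 0 < γ t)
    (hMpos : ∀ t ∈ Set.Ico 0 T, 0 ≤ M t)
    (hf : ∀ t ∈ Set.Ico 0 T, |f t| ≤ F) :
    ∀ t ∈ Set.Ico 0 T,
      deriv (lyap γ M) t ≤ (F + 1/2) * lyap γ M t ∧
      M t ≤ lyap γ M t ∧
      lyap γ M t ≤ lyap γ M 0 * Real.exp ((F + 1/2) * t) := by
  intro t ht
  have h0 : (0 : ℝ) ∈ Ico 0 T := ⟨le_rfl, ht.1.trans_lt ht.2⟩
  have hD := fun s (hs : s ∈ Ico 0 T) ↦ hasDerivAt_lyap (hM s hs) (hγ s hs) (hγpos s hs).ne'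
  have hrate := fun s (hs : s ∈ Ico 0 T) ↦
    lyapunov_rate_le (hγpos 0 h0).le (hγpos s hs) (hMpos s hs) (hf s hs)
  have hγ_le : γ t ≤ γ 0 :=
    antitoneOn_of_hasDerivAt_nonpos (convex_Ico 0 T) hγ
      (fun s hs ↦ neg_nonpos.2 (mul_nonneg (hγpos s hs).le (hMpos s hs))) h0 ht ht.1
  refine ⟨(hD t ht).deriv ▸ hrate t ht, le_lyap (hγpos t ht) hγ_le, ?_⟩
  simpa using le_mul_exp_of_hasDerivAt_le_mul (convex_Ico 0 T) hD hrate h0 ht ht.1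

/-- Lyapunov-function bound: if `M' = -M² + f`, `γ' = -γM`, `γ > 0`, `M ≥ 0`, `|f| ≤ F`,
then `ω' ≤ (F + ½)ω` and `M(t) ≤ ω(t) ≤ ω(0) e^{(F+½)t}`. -/
theorem lyapunov_slope_bound (T F : ℝ) (hF : 0 ≤ F) (M γ f : ℝ → ℝ) (hγ0 : 0 < γ 0)
    (hM : ∀ t ∈ Set.Ico 0 T, HasDerivAt M (-(M t) ^ 2 + f t) t)
    (hγ : ∀ t ∈ Set.Ico 0 T, HasDerivAt γ (-(γ t * M t)) t)
    (hγpos : ∀ t ∈ Set.Ico 0 T, 0 < γ t)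
    (hMpos : ∀ t ∈ Set.Ico 0 T, 0 ≤ M t)
    (hf : ∀ t ∈ Set.Ico 0 T, |f t| ≤ F) :
    ∀ t ∈ Set.Ico 0 T,
      deriv (lyap γ M) t ≤ (F + 1/2) * lyap γ M t ∧
      M t ≤ lyap γ M t ∧
      lyap γ M t ≤ lyap γ M 0 * Real.exp ((F + 1/2) * t) :=
  lyapunov_slope_bound_general T F M γ f hM hγ hγpos hMpos hf
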